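/- Let H be an atomic cancellative monoid with H ≠ H^×. Then ρ(H) = sup { ρ_k(H)/k : k ∈ ℕ } = lim_{k→∞} ρ_k(H)/k, and 1/ρ(H) = inf { λ_k(H)/k : k ∈ ℕ } = lim_{k→∞} λ_k(H)/k (with the convention 1/ρ(H) = 0 when ρ(H) = ∞). -/

import Mathlib

open scoped Classical ENNReal

/-- The set of lengths of `a`: all `k` such that `a` is a product of `k` irreducibles,
with the convention `L(a) = {0}` for units. -/
noncomputable def lengths {M : Type*} [Monoid M] (a : M) : Set ℕ :=
  if IsUnit a then {0}
  else {k | ∃ l : List M, l.length = k ∧ (∀ x ∈ l, Irreducible x) ∧ l.prod = a}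

/-- A monoid is atomic if every nonunit is a finite product of irreducibles (atoms). -/
def Atomic (M : Type*) [Monoid M] : Prop :=
  ∀ a : M, ¬IsUnit a → ∃ l : List M, (∀ x ∈ l, Irreducible x) ∧ l.prod = a

/-- The set of distances of a set `L ⊆ ℕ`. -/
def distances (L : Set ℕ) : Set ℕ :=
  {d | 0 < d ∧ ∃ k ∈ L, k + d ∈ L ∧ ∀ m ∈ L, k ≤ m → m ≤ k + d → m = k ∨ m = k + d}

/-- The set of distances `Δ(H)` of a monoid. -/
def DeltaH (M : Type*) [Monoid M] : Set ℕ :=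
  ⋃ a : M, distances (lengths a)

/-- The union `U_k(H)` of all sets of lengths containing `k`. -/
def lengthUnion (M : Type*) [Monoid M] (k : ℕ) : Set ℕ :=
  {ℓ | ∃ l1 l2 : List M, l1.length = k ∧ l2.length = ℓ ∧
      (∀ x ∈ l1, Irreducible x) ∧ (∀ x ∈ l2, Irreducible x) ∧ l1.prod = l2.prod}

/-- The `k`-th elasticity `ρ_k(H) = sup U_k(H)`, valued in `ℝ≥0∞`. -/
noncomputable def rhoK (M : Type*) [Monoid M] (k : ℕ) : ℝ≥0∞ :=
  ⨆ ℓ ∈ lengthUnion M k, (ℓ : ℝ≥0∞)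

/-- `λ_k(H) = min U_k(H)`. -/
noncomputable def lamK (M : Type*) [Monoid M] (k : ℕ) : ℕ :=
  sInf (lengthUnion M k)

/-- The elasticity `ρ(L) = sup L / min L` of a set of lengths, with `ρ({0}) = 1`. -/
noncomputable def setElasticity (L : Set ℕ) : ℝ≥0∞ :=
  if L = {0} then 1 else (⨆ n ∈ L, (n : ℝ≥0∞)) / ((sInf L : ℕ) : ℝ≥0∞)

/-- The elasticity `ρ(H) = sup { ρ(L(a)) : a ∈ H }`. -/
noncomputable def elasticity (M : Type*) [Monoid M] : ℝ≥0∞ :=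
  ⨆ a : M, setElasticity (lengths a)

/-- The principal left ideal `Ha`. -/
def leftIdeal {M : Type*} [Monoid M] (a : M) : Set M := Set.range (· * a)

/-- The principal right ideal `aH`. -/
def rightIdeal {M : Type*} [Monoid M] (a : M) : Set M := Set.range (a * ·)

/-- `A` is a generating set of the monoid `M`. -/
def Generates {M : Type*} [Monoid M] (A : Set M) : Prop :=
  ∀ a : M, ∃ l : List M, (∀ x ∈ l, x ∈ A) ∧ l.prod = a

/-! If `a` is a nonunit with `m = min L(a)`, then `L(a) ⊆ U_m`, so `ρ(L(a)) ≤ ρ_m / m`; conversely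
every `ℓ ∈ U_k` lies in `L(a)` for a product `a` of `k` atoms, so `ℓ / k ≤ ρ(L(a))`. The same
comparison, read with minima and suprema exchanged, identifies `1/ρ(H)` with `inf λ_k / k`.
Concatenating factorizations makes `k ↦ ρ_k` superadditive and `k ↦ λ_k` subadditive, and the two
limits are instances of Fekete's lemma. -/

open Filter Topology

namespace ENNReal

section Superadditive

variable {u : ℕ → ℝ≥0∞} (hu : ∀ j k, u j + u k ≤ u (j + k))
include hu

lemma natCast_mul_le_apply_mul_of_superadditive (q n : ℕ) : q * u n ≤ u (q * n) := by
  induction q with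
  | zero => simp
  | succ q ih =>
    calc ((q + 1 : ℕ) : ℝ≥0∞) * u n = q * u n + u n := by push_cast; ring
      _ ≤ u (q * n) + u n := by gcongr
      _ ≤ u ((q + 1) * n) := by rw [add_one_mul]; exact hu _ _

lemma one_sub_div_mul_le_of_superadditive {n : ℕ} (hn : n ≠ 0) (k : ℕ) :
    (1 - n / k) * (u n / n) ≤ u k / k := by
  rcases Nat.eq_zero_or_pos k with rfl | hk
  · rw [Nat.cast_zero, ENNReal.div_zero (by exact_mod_cast hn)]
    simp
  have hk0 : (k : ℝ≥0∞) ≠ 0 := by exact_mod_cast hk.ne'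
  -- with `k = q n + r`, superadditivity gives `q u(n) ≤ u(k)`, and `q n ≥ k - n`
  rw [ENNReal.le_div_iff_mul_le (.inl hk0) (.inl (natCast_ne_top k)), mul_right_comm,
    ENNReal.sub_mul (fun _ _ => natCast_ne_top k), one_mul,
    ENNReal.div_mul_cancel hk0 (natCast_ne_top k), ← natCast_sub]
  have hq : k - n ≤ k / n * n := by
    have := Nat.lt_div_mul_add (a := k) (Nat.pos_of_ne_zero hn)
    omega
  calc ((k - n : ℕ) : ℝ≥0∞) * (u n / n) ≤ (k / n * n : ℕ) * (u n / n) := by gcongr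
    _ = (k / n : ℕ) * u n := by
      rw [Nat.cast_mul, mul_assoc, ENNReal.mul_div_cancel (by exact_mod_cast hn) (natCast_ne_top n)]
    _ ≤ u (k / n * n) := natCast_mul_le_apply_mul_of_superadditive hu _ _
    _ ≤ u (k / n * n + k % n) := le_self_add.trans (hu _ _)
    _ = u k := by rw [Nat.div_add_mod']

theorem tendsto_div_of_superadditive :
    Tendsto (fun k : ℕ => u k / k) atTop (𝓝 (⨆ k : ℕ, u (k + 1) / ((k : ℝ≥0∞) + 1))) := by
  refine tendsto_order.2 ⟨fun a ha => ?_, fun b hb => ?_⟩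
  · obtain ⟨n, hn⟩ := lt_iSup_iff.1 ha
    have hlim : Tendsto (fun k : ℕ => (1 - ((n + 1 : ℕ) : ℝ≥0∞) / k) * (u (n + 1) / (n + 1 : ℕ)))
        atTop (𝓝 (u (n + 1) / ((n : ℝ≥0∞) + 1))) := by
      have hdiv : Tendsto (fun k : ℕ => ((n + 1 : ℕ) : ℝ≥0∞) / k) atTop (𝓝 0) := by
        simpa [div_eq_mul_inv] using ENNReal.Tendsto.const_mul ENNReal.tendsto_inv_nat_nhds_zero
          (.inr (natCast_ne_top (n + 1)))
      simpa using ENNReal.Tendsto.mul_const (b := u (n + 1) / (n + 1 : ℕ))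
        (ENNReal.Tendsto.sub tendsto_const_nhds hdiv (.inl one_ne_top)) (.inl (by simp))
    filter_upwards [hlim.eventually (lt_mem_nhds hn)] with k hk
    exact hk.trans_le (one_sub_div_mul_le_of_superadditive hu n.succ_ne_zero k)
  · filter_upwards [eventually_ge_atTop 1] with k hk
    obtain ⟨j, rfl⟩ := Nat.exists_eq_add_of_le' hk
    exact lt_of_le_of_lt (by simpa using le_iSup (fun j : ℕ => u (j + 1) / ((j : ℝ≥0∞) + 1)) j) hb

end Superadditive

lemma ofReal_natCast_div_natCast (a : ℕ) {n : ℕ} (hn : n ≠ 0) :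
    ENNReal.ofReal ((a : ℝ) / n) = (a : ℝ≥0∞) / n := by
  rw [ENNReal.ofReal_div_of_pos (by positivity), ofReal_natCast, ofReal_natCast]

theorem tendsto_natCast_div_of_subadditive {u : ℕ → ℕ} (hu : ∀ j k, u (j + k) ≤ u j + u k) :
    Tendsto (fun k : ℕ => (u k : ℝ≥0∞) / k) atTop
      (𝓝 (⨅ k : ℕ, (u (k + 1) : ℝ≥0∞) / ((k : ℝ≥0∞) + 1))) := by
  have hs : Subadditive (fun n => (u n : ℝ)) := fun j k => by dsimp only; exact_mod_cast hu j k
  have hbdd : BddBelow (Set.range fun n => (u n : ℝ) / n) :=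
    ⟨0, by rintro _ ⟨n, rfl⟩; positivity⟩
  have hlim := ENNReal.tendsto_ofReal (hs.tendsto_lim hbdd)
  have heq : ∀ᶠ k in atTop, ENNReal.ofReal ((u k : ℝ) / k) = (u k : ℝ≥0∞) / k :=
    (eventually_ne_atTop 0).mono fun k hk => ofReal_natCast_div_natCast (u k) hk
  have hinf : ENNReal.ofReal hs.lim = ⨅ k : ℕ, (u (k + 1) : ℝ≥0∞) / ((k : ℝ≥0∞) + 1) := by
    refine le_antisymm (le_iInf fun k => ?_) (ge_of_tendsto hlim ?_)
    · have := ENNReal.ofReal_le_ofReal (hs.lim_le_div hbdd k.succ_ne_zero)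
      rwa [ofReal_natCast_div_natCast _ k.succ_ne_zero, Nat.cast_succ] at this
    · filter_upwards [heq, eventually_ge_atTop 1] with k hk hk1
      obtain ⟨j, rfl⟩ := Nat.exists_eq_add_of_le' hk1
      rw [hk]
      exact_mod_cast iInf_le (fun j : ℕ => (u (j + 1) : ℝ≥0∞) / ((j : ℝ≥0∞) + 1)) j
  rw [← hinf]
  exact hlim.congr' heq

end ENNReal

section Lengths

variable {M : Type*} [Monoid M]

lemma exists_irreducible_of_atomic (hA : Atomic M) (hne : ∃ a : M, ¬IsUnit a) :
    ∃ p : M, Irreducible p := by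
  obtain ⟨a, ha⟩ := hne
  obtain ⟨l, hl, rfl⟩ := hA a ha
  obtain ⟨p, t, rfl⟩ := List.exists_cons_of_ne_nil (l := l) (by rintro rfl; exact ha isUnit_one)
  exact ⟨p, hl p List.mem_cons_self⟩

lemma mem_lengths_iff {a : M} (ha : ¬IsUnit a) {k : ℕ} :
    k ∈ lengths a ↔ ∃ l : List M, l.length = k ∧ (∀ x ∈ l, Irreducible x) ∧ l.prod = a := by
  rw [lengths, if_neg ha, Set.mem_ofPred_eq]

lemma zero_notMem_lengths {a : M} (ha : ¬IsUnit a) : 0 ∉ lengths a := by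
  intro h
  obtain ⟨l, hl, -, rfl⟩ := (mem_lengths_iff ha).1 h
  exact ha (by simp [List.length_eq_zero_iff.1 hl])

lemma setElasticity_lengths {a : M} (ha : ¬IsUnit a) :
    setElasticity (lengths a) = (⨆ n ∈ lengths a, (n : ℝ≥0∞)) / ((sInf (lengths a) : ℕ) : ℝ≥0∞) :=
  if_neg fun h : lengths a = {0} => zero_notMem_lengths ha (h ▸ Set.mem_singleton 0)

lemma mem_lengthUnion_of_mem_lengths {a : M} (ha : ¬IsUnit a) {k ℓ : ℕ}
    (hk : k ∈ lengths a) (hℓ : ℓ ∈ lengths a) : ℓ ∈ lengthUnion M k := by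
  obtain ⟨l₁, h₁, f₁, rfl⟩ := (mem_lengths_iff ha).1 hk
  obtain ⟨l₂, h₂, f₂, e⟩ := (mem_lengths_iff ha).1 hℓ
  exact ⟨l₁, l₂, h₁, h₂, f₁, f₂, e.symm⟩

lemma self_mem_lengthUnion {p : M} (hp : Irreducible p) (k : ℕ) : k ∈ lengthUnion M k := by
  have hrep : ∀ x ∈ List.replicate k p, Irreducible x := fun x hx =>
    List.eq_of_mem_replicate hx ▸ hp
  exact ⟨_, _, List.length_replicate, List.length_replicate, hrep, hrep, rfl⟩

lemma add_mem_lengthUnion {j k a b : ℕ} (ha : a ∈ lengthUnion M j) (hb : b ∈ lengthUnion M k) :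
    a + b ∈ lengthUnion M (j + k) := by
  obtain ⟨l₁, l₂, h₁, h₂, f₁, f₂, e⟩ := ha
  obtain ⟨m₁, m₂, g₁, g₂, f₁', f₂', e'⟩ := hb
  refine ⟨l₁ ++ m₁, l₂ ++ m₂, by simp [h₁, g₁], by simp [h₂, g₂], ?_, ?_, by simp [e, e']⟩ <;>
    simp only [List.mem_append] <;> rintro x (hx | hx)
  exacts [f₁ x hx, f₁' x hx, f₂ x hx, f₂' x hx]

lemma lamK_mem {p : M} (hp : Irreducible p) (k : ℕ) : lamK M k ∈ lengthUnion M k :=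
  Nat.sInf_mem ⟨k, self_mem_lengthUnion hp k⟩

lemma lamK_le {k ℓ : ℕ} (h : ℓ ∈ lengthUnion M k) : lamK M k ≤ ℓ := Nat.sInf_le h

lemma lamK_add_le {p : M} (hp : Irreducible p) (j k : ℕ) :
    lamK M (j + k) ≤ lamK M j + lamK M k :=
  lamK_le (add_mem_lengthUnion (lamK_mem hp j) (lamK_mem hp k))

lemma le_rhoK {k ℓ : ℕ} (h : ℓ ∈ lengthUnion M k) : (ℓ : ℝ≥0∞) ≤ rhoK M k :=
  le_iSup₂ (f := fun (ℓ : ℕ) (_ : ℓ ∈ lengthUnion M k) => (ℓ : ℝ≥0∞)) ℓ h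

lemma rhoK_add_rhoK_le {p : M} (hp : Irreducible p) (j k : ℕ) :
    rhoK M j + rhoK M k ≤ rhoK M (j + k) :=
  ENNReal.biSup_add_biSup_le ⟨j, self_mem_lengthUnion hp j⟩ ⟨k, self_mem_lengthUnion hp k⟩
    fun a ha b hb => by exact_mod_cast le_rhoK (add_mem_lengthUnion ha hb)

lemma setElasticity_lengths_le_iSup_rhoK_div {p : M} (hp : Irreducible p) (a : M) :
    setElasticity (lengths a) ≤ ⨆ k : ℕ, rhoK M (k + 1) / ((k : ℝ≥0∞) + 1) := by
  by_cases ha : IsUnit a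
  · rw [lengths, if_pos ha, setElasticity, if_pos rfl]
    exact le_iSup_of_le 0 (by simpa using le_rhoK (self_mem_lengthUnion hp 1))
  rw [setElasticity_lengths ha]
  rcases (lengths a).eq_empty_or_nonempty with he | hne
  · simp [he] -- a nonunit without factorization has `ρ(∅) = 0 / 0 = 0`
  have hmin := Nat.sInf_mem hne
  obtain ⟨k, hk⟩ := Nat.exists_eq_succ_of_ne_zero fun h => zero_notMem_lengths ha (h ▸ hmin)
  calc (⨆ n ∈ lengths a, (n : ℝ≥0∞)) / ((sInf (lengths a) : ℕ) : ℝ≥0∞)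
      ≤ rhoK M (sInf (lengths a)) / ((sInf (lengths a) : ℕ) : ℝ≥0∞) := by
        gcongr
        exact iSup₂_le fun n hn => le_rhoK (mem_lengthUnion_of_mem_lengths ha hmin hn)
    _ = rhoK M (k + 1) / ((k : ℝ≥0∞) + 1) := by rw [hk]; push_cast; rfl
    _ ≤ _ := le_iSup (fun k : ℕ => rhoK M (k + 1) / ((k : ℝ≥0∞) + 1)) k

lemma iInf_lamK_div_le_inv_setElasticity {p : M} (hp : Irreducible p) (a : M) :
    ⨅ k : ℕ, (lamK M (k + 1) : ℝ≥0∞) / ((k : ℝ≥0∞) + 1) ≤ (setElasticity (lengths a))⁻¹ := by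
  set I := ⨅ k : ℕ, (lamK M (k + 1) : ℝ≥0∞) / ((k : ℝ≥0∞) + 1)
  have hI : ∀ {n : ℕ}, n ≠ 0 → I ≤ (lamK M n : ℝ≥0∞) / n := fun hn => by
    obtain ⟨k, rfl⟩ := Nat.exists_eq_succ_of_ne_zero hn
    exact iInf_le_of_le k (by push_cast; rfl)
  by_cases ha : IsUnit a
  · rw [lengths, if_pos ha, setElasticity, if_pos rfl, inv_one]
    exact (hI one_ne_zero).trans (by simpa using lamK_le (self_mem_lengthUnion hp 1))
  rw [setElasticity_lengths ha]
  rcases (lengths a).eq_empty_or_nonempty with he | hne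
  · simp [he]
  have hmin := Nat.sInf_mem hne
  have hmin0 : ((sInf (lengths a) : ℕ) : ℝ≥0∞) ≠ 0 :=
    Nat.cast_ne_zero.2 fun h => zero_notMem_lengths ha (h ▸ hmin)
  rw [ENNReal.inv_div (.inl (ENNReal.natCast_ne_top _)) (.inl hmin0),
    ENNReal.le_div_iff_mul_le (.inr hmin0) (.inr (ENNReal.natCast_ne_top _))]
  simp only [ENNReal.mul_iSup]
  refine iSup₂_le fun n hn => ?_
  have hn0 : n ≠ 0 := fun h => zero_notMem_lengths ha (h ▸ hn)
  rw [← ENNReal.le_div_iff_mul_le (.inl (by exact_mod_cast hn0)) (.inl (ENNReal.natCast_ne_top n))]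
  exact (hI hn0).trans
    (by gcongr; exact lamK_le (mem_lengthUnion_of_mem_lengths ha hn hmin))

end Lengths

section Elasticity

variable {M : Type*} [Monoid M] [IsDedekindFiniteMonoid M]

lemma not_isUnit_prod_of_irreducible {l : List M} (hl : l ≠ []) (h : ∀ x ∈ l, Irreducible x) :
    ¬IsUnit l.prod := by
  obtain ⟨p, t, rfl⟩ := List.exists_cons_of_ne_nil hl
  rw [List.prod_cons]
  exact fun hu => (h p List.mem_cons_self).not_isUnit (isUnit_of_mul_isUnit_left hu)

lemma exists_mem_lengths_of_mem_lengthUnion {k ℓ : ℕ} (hk : k ≠ 0) (h : ℓ ∈ lengthUnion M k) :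
    ∃ a : M, ¬IsUnit a ∧ k ∈ lengths a ∧ ℓ ∈ lengths a := by
  obtain ⟨l₁, l₂, h₁, h₂, f₁, f₂, e⟩ := h
  have ha : ¬IsUnit l₁.prod :=
    not_isUnit_prod_of_irreducible (by rintro rfl; exact hk h₁.symm) f₁
  exact ⟨l₁.prod, ha, (mem_lengths_iff ha).2 ⟨l₁, h₁, f₁, rfl⟩,
    (mem_lengths_iff ha).2 ⟨l₂, h₂, f₂, e.symm⟩⟩

lemma rhoK_succ_div_le_elasticity (k : ℕ) :
    rhoK M (k + 1) / ((k : ℝ≥0∞) + 1) ≤ elasticity M := by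
  simp only [rhoK, ENNReal.iSup_div]
  refine iSup₂_le fun ℓ hℓ => ?_
  obtain ⟨a, ha, hk, hℓ⟩ := exists_mem_lengths_of_mem_lengthUnion k.succ_ne_zero hℓ
  calc (ℓ : ℝ≥0∞) / ((k : ℝ≥0∞) + 1)
      ≤ (⨆ n ∈ lengths a, (n : ℝ≥0∞)) / ((sInf (lengths a) : ℕ) : ℝ≥0∞) :=
        ENNReal.div_le_div (le_iSup₂ (f := fun (n : ℕ) (_ : n ∈ lengths a) => (n : ℝ≥0∞)) ℓ hℓ)
          (by exact_mod_cast Nat.sInf_le hk)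
    _ = setElasticity (lengths a) := (setElasticity_lengths ha).symm
    _ ≤ elasticity M := le_iSup (fun a : M => setElasticity (lengths a)) a

theorem elasticity_eq_iSup_rhoK_div {p : M} (hp : Irreducible p) :
    elasticity M = ⨆ k : ℕ, rhoK M (k + 1) / ((k : ℝ≥0∞) + 1) :=
  le_antisymm (iSup_le (setElasticity_lengths_le_iSup_rhoK_div hp))
    (iSup_le rhoK_succ_div_le_elasticity)

lemma exists_inv_setElasticity_le_lamK_div {p : M} (hp : Irreducible p) (k : ℕ) :
    ∃ a : M, (setElasticity (lengths a))⁻¹ ≤ (lamK M (k + 1) : ℝ≥0∞) / ((k : ℝ≥0∞) + 1) := by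
  obtain ⟨a, ha, hk, hℓ⟩ :=
    exists_mem_lengths_of_mem_lengthUnion k.succ_ne_zero (lamK_mem hp (k + 1))
  have hsup : (k : ℝ≥0∞) + 1 ≤ ⨆ n ∈ lengths a, (n : ℝ≥0∞) := by
    exact_mod_cast le_iSup₂ (f := fun (n : ℕ) (_ : n ∈ lengths a) => (n : ℝ≥0∞)) (k + 1) hk
  refine ⟨a, ?_⟩
  rw [setElasticity_lengths ha, ENNReal.inv_div (.inl (ENNReal.natCast_ne_top _))
    (.inr (ne_bot_of_le_ne_bot (by simp) hsup))]
  exact ENNReal.div_le_div (by exact_mod_cast Nat.sInf_le hℓ) hsup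

theorem one_div_elasticity_eq_iInf_lamK_div {p : M} (hp : Irreducible p) :
    1 / elasticity M = ⨅ k : ℕ, (lamK M (k + 1) : ℝ≥0∞) / ((k : ℝ≥0∞) + 1) := by
  rw [one_div, elasticity, ENNReal.inv_iSup]
  refine le_antisymm (le_iInf fun k => ?_) (le_iInf (iInf_lamK_div_le_inv_setElasticity hp))
  obtain ⟨a, ha⟩ := exists_inv_setElasticity_le_lamK_div hp k
  exact iInf_le_of_le a ha

end Elasticity

theorem stmt6 {M : Type*} [CancelMonoid M] (hA : Atomic M) (hne : ∃ a : M, ¬IsUnit a) :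
    elasticity M = (⨆ k : ℕ, rhoK M (k + 1) / ((k : ℝ≥0∞) + 1)) ∧
    Filter.Tendsto (fun k : ℕ => rhoK M k / (k : ℝ≥0∞)) Filter.atTop (nhds (elasticity M)) ∧
    1 / elasticity M = (⨅ k : ℕ, (lamK M (k + 1) : ℝ≥0∞) / ((k : ℝ≥0∞) + 1)) ∧
    Filter.Tendsto (fun k : ℕ => (lamK M k : ℝ≥0∞) / (k : ℝ≥0∞)) Filter.atTop
      (nhds (1 / elasticity M)) := by
  obtain ⟨p, hp⟩ := exists_irreducible_of_atomic hA hne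
  have hrho := elasticity_eq_iSup_rhoK_div hp
  have hlam := one_div_elasticity_eq_iInf_lamK_div hp
  refine ⟨hrho, ?_, hlam, ?_⟩
  · rw [hrho]
    exact ENNReal.tendsto_div_of_superadditive (rhoK_add_rhoK_le hp)
  · rw [hlam]
    exact ENNReal.tendsto_natCast_div_of_subadditive (lamK_add_le hp)
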